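/- For exchangeable scores Z_1,…,Z_{n+1}, and q defined as the ⌈(n+1)(1−α)⌉-th order statistic of Z_1,…,Z_n with distinct values almost surely, the coverage also satisfies the upper bound P(Z_{n+1} ≤ q) ≤ 1 − α + 1/(n+1). -/

import Mathlib

open MeasureTheory

/-- The `k`-th smallest element (1-indexed) of a list of reals. -/
noncomputable def kthSmallest (l : List ℝ) (k : ℕ) : ℝ :=
  (l.mergeSort (fun a b => a ≤ b)).getD (k - 1) 0

open Finset ENNReal

/-!
Let `R` be the rank of `Z_{n+1}` among `Z_1, …, Z_{n+1}`. By exchangeability the events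
`{rank of Z_i = j}`, `i = 1, …, n+1`, are equally likely, and since the `Z_i` are a.s. distinct
they are a.s. disjoint, so each has probability at most `1/(n+1)`. If `Z_{n+1} ≤ q`, fewer than
`k` of `Z_1, …, Z_n` lie strictly below `Z_{n+1}`, so `R ≤ k`. Hence the coverage is at most
`k/(n+1) < 1 - α + 1/(n+1)`.
-/

theorem List.countP_ofFn {α : Type*} {n : ℕ} (f : Fin n → α) (p : α → Bool) :
    (List.ofFn f).countP p = #{i | p (f i)} := by
  rw [List.ofFn_eq_map, List.countP_map, Finset.card_def, Finset.filter_val, Fin.univ_def]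
  simp [List.countP_eq_length_filter]
  rfl

theorem le_of_mem_drop_of_le_kthSmallest {l : List ℝ} {k : ℕ} {t x : ℝ}
    (ht : t ≤ kthSmallest l k) (hx : x ∈ (l.mergeSort (· ≤ ·)).drop (k - 1)) : t ≤ x := by
  set s := l.mergeSort (· ≤ ·)
  have hk : k - 1 < s.length := by
    by_contra! h
    rw [List.drop_eq_nil_of_le h] at hx
    cases hx
  have hsorted : (s.drop (k - 1)).Pairwise (· ≤ ·) := (List.pairwise_mergeSort' _ l).drop
  rw [List.drop_eq_getElem_cons hk] at hx hsorted
  have hkth : kthSmallest l k = s[k - 1] := List.getD_eq_getElem _ _ hk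
  rcases List.mem_cons.1 hx with rfl | hx
  · exact hkth ▸ ht
  · exact ht.trans (hkth ▸ List.rel_of_pairwise_cons hsorted hx)

theorem countP_lt_le_of_le_kthSmallest {l : List ℝ} {k : ℕ} {t : ℝ}
    (ht : t ≤ kthSmallest l k) : l.countP (· < t) ≤ k - 1 := by
  set s := l.mergeSort (· ≤ ·)
  have hdrop : (s.drop (k - 1)).countP (· < t) = 0 :=
    List.countP_eq_zero.2 fun x hx => by simpa using le_of_mem_drop_of_le_kthSmallest ht hx
  calc l.countP (· < t) = s.countP (· < t) := ((List.mergeSort_perm l _).countP_eq _).symm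
    _ = (s.take (k - 1)).countP (· < t) := by
      rw [← add_zero (List.countP _ (s.take _)), ← hdrop, ← List.countP_append,
        List.take_append_drop]
    _ ≤ k - 1 := List.countP_le_length.trans (List.length_take_le _ _)

section Rank

variable {ι : Type*} [Fintype ι]

noncomputable def rank (v : ι → ℝ) (i : ι) : ℕ := #{j | v j ≤ v i}

theorem rank_comp_perm (v : ι → ℝ) (σ : Equiv.Perm ι) (i : ι) :
    rank (v ∘ σ) i = rank v (σ i) :=
  Finset.card_equiv σ (by simp)

theorem one_le_rank (v : ι → ℝ) (i : ι) : 1 ≤ rank v i :=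
  Finset.one_le_card.2 ⟨i, by simp⟩

theorem rank_lt_rank {v : ι → ℝ} {i j : ι} (h : v i < v j) : rank v i < rank v j := by
  refine Finset.card_lt_card <| (Finset.ssubset_iff_of_subset fun l hl => ?_).2 ⟨j, ?_, ?_⟩
  · simp only [Finset.mem_filter_univ] at hl ⊢
    exact hl.trans h.le
  · simp
  · simpa using h

theorem rank_injective {v : ι → ℝ} (hv : Function.Injective v) :
    Function.Injective (rank v) := by
  intro i j hij
  by_contra hne
  rcases (hv.ne hne).lt_or_gt with h | h
  · exact (rank_lt_rank h).ne hij
  · exact (rank_lt_rank h).ne' hij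

theorem measurable_rank (i : ι) : Measurable fun v : ι → ℝ => rank v i := by
  simp_rw [rank, Finset.card_filter]
  refine Finset.measurable_sum _ fun j _ => ?_
  exact Measurable.ite (measurableSet_le (measurable_pi_apply j) (measurable_pi_apply i))
    measurable_const measurable_const

end Rank

theorem rank_last_eq {n : ℕ} {v : Fin (n + 1) → ℝ} (hv : Function.Injective v) :
    rank v (Fin.last n) = #{i : Fin n | v i.castSucc < v (Fin.last n)} + 1 := by
  rw [rank, Finset.card_filter, Finset.card_filter, Fin.sum_univ_castSucc, if_pos le_rfl]
  congr 1
  refine Finset.sum_congr rfl fun i _ => ?_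
  have hne : v i.castSucc ≠ v (Fin.last n) := hv.ne (Fin.castSucc_lt_last i).ne
  simp [le_iff_lt_or_eq, hne]

theorem rank_last_le_of_le_kthSmallest {n k : ℕ} {v : Fin (n + 1) → ℝ}
    (hv : Function.Injective v) (hk : 1 ≤ k)
    (h : v (Fin.last n) ≤ kthSmallest (List.ofFn fun i : Fin n => v i.castSucc) k) :
    rank v (Fin.last n) ≤ k := by
  have hcount := countP_lt_le_of_le_kthSmallest h
  rw [List.countP_ofFn] at hcount
  simp only [decide_eq_true_eq] at hcount
  rw [rank_last_eq hv]
  omega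

section Exchangeable

variable {ι Ω : Type*} [MeasurableSpace Ω]

def Exchangeable (X : Ω → ι → ℝ) (μ : Measure Ω) : Prop :=
  ∀ σ : Equiv.Perm ι, μ.map (fun ω => X ω ∘ σ) = μ.map X

variable [Fintype ι] {μ : Measure Ω} {X : Ω → ι → ℝ}

theorem measure_rank_eq_eq_of_exchangeable (hX : Measurable X) (hexch : Exchangeable X μ)
    (i i' : ι) (j : ℕ) :
    μ {ω | rank (X ω) i = j} = μ {ω | rank (X ω) i' = j} := by
  classical
  have hS : MeasurableSet {v : ι → ℝ | rank v i' = j} :=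
    measurable_rank i' (measurableSet_singleton j)
  have hpre : {ω | rank (X ω) i = j} =
      (fun ω => X ω ∘ Equiv.swap i i') ⁻¹' {v | rank v i' = j} := by
    ext ω
    simp [rank_comp_perm]
  rw [hpre, ← Measure.map_apply (by fun_prop) hS, hexch, Measure.map_apply hX hS]
  rfl

theorem measure_rank_eq_le_of_exchangeable [IsProbabilityMeasure μ] (hX : Measurable X)
    (hexch : Exchangeable X μ) (hinj : ∀ᵐ ω ∂μ, Function.Injective (X ω))
    (i : ι) (j : ℕ) :
    μ {ω | rank (X ω) i = j} ≤ (Fintype.card ι : ℝ≥0∞)⁻¹ := by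
  have hdisj : (↑(univ : Finset ι) : Set ι).Pairwise
      (Function.onFun (AEDisjoint μ) fun i' => {ω | rank (X ω) i' = j}) := by
    intro i₁ _ i₂ _ hne
    refine measure_eq_zero_iff_ae_notMem.2 (hinj.mono fun ω hω hmem => hne ?_)
    exact rank_injective hω (hmem.1.trans hmem.2.symm)
  have hmeas (i' : ι) : NullMeasurableSet {ω | rank (X ω) i' = j} μ :=
    (measurable_rank i' (measurableSet_singleton j)).preimage hX |>.nullMeasurableSet
  rw [ENNReal.le_inv_iff_mul_le]
  calc μ {ω | rank (X ω) i = j} * Fintype.card ι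
      = ∑ i' : ι, μ {ω | rank (X ω) i' = j} := by
        simp [measure_rank_eq_eq_of_exchangeable hX hexch _ i, mul_comm]
    _ = μ (⋃ i' ∈ univ, {ω | rank (X ω) i' = j}) :=
        (measure_biUnion_finset₀ hdisj fun i' _ => hmeas i').symm
    _ ≤ 1 := prob_le_one

theorem measure_rank_le_le_of_exchangeable [IsProbabilityMeasure μ] (hX : Measurable X)
    (hexch : Exchangeable X μ) (hinj : ∀ᵐ ω ∂μ, Function.Injective (X ω))
    (i : ι) (k : ℕ) :
    μ {ω | rank (X ω) i ≤ k} ≤ k * (Fintype.card ι : ℝ≥0∞)⁻¹ := by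
  have hsub : {ω | rank (X ω) i ≤ k} ⊆ ⋃ j ∈ Icc 1 k, {ω | rank (X ω) i = j} :=
    fun ω hω => by simpa using ⟨one_le_rank _ _, hω⟩
  calc μ {ω | rank (X ω) i ≤ k}
      ≤ ∑ j ∈ Icc 1 k, μ {ω | rank (X ω) i = j} :=
        (measure_mono hsub).trans (measure_biUnion_finset_le _ _)
    _ ≤ ∑ _j ∈ Icc 1 k, (Fintype.card ι : ℝ≥0∞)⁻¹ :=
        sum_le_sum fun j _ => measure_rank_eq_le_of_exchangeable hX hexch hinj i j
    _ = k * (Fintype.card ι : ℝ≥0∞)⁻¹ := by simp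

end Exchangeable

theorem split_conformal_coverage_upper_bound_general
    {Ω : Type*} [MeasurableSpace Ω] (μ : Measure Ω) [IsProbabilityMeasure μ]
    (n : ℕ) (α : ℝ) (hα : α ∈ Set.Ioo (0:ℝ) 1)
    (Z : Fin (n + 1) → Ω → ℝ) (hZ : ∀ i, Measurable (Z i))
    (hexch : ∀ σ : Equiv.Perm (Fin (n + 1)),
      Measure.map (fun ω => fun i => Z (σ i) ω) μ =
        Measure.map (fun ω => fun i => Z i ω) μ)
    (hdistinct : μ {ω | ∃ i j : Fin (n + 1), i ≠ j ∧ Z i ω = Z j ω} = 0) :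
    μ {ω | Z (Fin.last n) ω ≤
        kthSmallest (List.ofFn fun i : Fin n => Z i.castSucc ω)
          ⌈(n + 1 : ℝ) * (1 - α)⌉₊} ≤
      ENNReal.ofReal (1 - α + 1 / (n + 1)) := by
  set k := ⌈(n + 1 : ℝ) * (1 - α)⌉₊
  have hpos : 0 < (n + 1 : ℝ) * (1 - α) := mul_pos (by positivity) (by linarith [hα.2])
  have hk : 1 ≤ k := Nat.one_le_iff_ne_zero.2 (Nat.ceil_pos.2 hpos).ne'
  have hinj : ∀ᵐ ω ∂μ, Function.Injective fun i => Z i ω :=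
    measure_eq_zero_iff_ae_notMem.1 hdistinct |>.mono fun ω hω i j hij => by
      by_contra hne
      exact hω ⟨i, j, hne, hij⟩
  calc μ {ω | Z (Fin.last n) ω ≤ kthSmallest (List.ofFn fun i : Fin n => Z i.castSucc ω) k}
      ≤ μ {ω | rank (fun i => Z i ω) (Fin.last n) ≤ k} :=
        measure_mono_ae <| hinj.mono fun ω hω => rank_last_le_of_le_kthSmallest hω hk
    _ ≤ k * ((n + 1 : ℕ) : ℝ≥0∞)⁻¹ := by
        simpa using measure_rank_le_le_of_exchangeable (measurable_pi_lambda _ hZ) hexch hinj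
          (Fin.last n) k
    _ = ENNReal.ofReal (k / (n + 1)) := by
        rw [ENNReal.ofReal_div_of_pos (by positivity), div_eq_mul_inv, ENNReal.ofReal_natCast]
        norm_cast
    _ ≤ ENNReal.ofReal (1 - α + 1 / (n + 1)) := by
        refine ENNReal.ofReal_le_ofReal ?_
        rw [div_le_iff₀ (by positivity), add_mul, one_div_mul_cancel (by positivity)]
        linarith [Nat.ceil_lt_add_one hpos.le]

/-- Upper bound for split conformal coverage: for exchangeable, almost surely
pairwise distinct `Z_1, …, Z_{n+1}` and `q` the `⌈(n+1)(1−α)⌉`-th smallest among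
`Z_1, …, Z_n`, we have `P(Z_{n+1} ≤ q) ≤ 1 − α + 1/(n+1)`. -/
theorem split_conformal_coverage_upper_bound
    {Ω : Type*} [MeasurableSpace Ω] (μ : Measure Ω) [IsProbabilityMeasure μ]
    (n : ℕ) (hn : 0 < n) (α : ℝ) (hα : α ∈ Set.Ioo (0:ℝ) 1)
    (Z : Fin (n + 1) → Ω → ℝ) (hZ : ∀ i, Measurable (Z i))
    (hexch : ∀ σ : Equiv.Perm (Fin (n + 1)),
      Measure.map (fun ω => fun i => Z (σ i) ω) μ =
        Measure.map (fun ω => fun i => Z i ω) μ)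
    (hdistinct : μ {ω | ∃ i j : Fin (n + 1), i ≠ j ∧ Z i ω = Z j ω} = 0)
    (hk : ⌈(n + 1 : ℝ) * (1 - α)⌉₊ ≤ n) :
    μ {ω | Z (Fin.last n) ω ≤
        kthSmallest (List.ofFn fun i : Fin n => Z i.castSucc ω)
          ⌈(n + 1 : ℝ) * (1 - α)⌉₊} ≤
      ENNReal.ofReal (1 - α + 1 / (n + 1)) :=
  split_conformal_coverage_upper_bound_general μ n α hα Z hZ hexch hdistinct
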